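/- Let n ≥ 1, let γ₁, …, γ_n > −1 with μ_i = γ_i + 1, let Φ : ℂ∖ℝ_{≤0} → M_{n+1}(ℂ) be the lower unitriangular matrix with Φ(z)_{ij} = z^{μ_j+⋯+μ_{i−1}} / ∏_{l=j}^{i−1}(μ_l+⋯+μ_{i−1}) for i > j, and let Λ = diag(λ₁, …, λ_{n+1}) with λ_k > 0 and λ₁⋯λ_{n+1} = 1. For 1 ≤ i ≤ n let D_i(z) be the leading principal i×i minor of (ΛΦ(z))*(ΛΦ(z)), let U_i(z) = −log D_i(z) + 2γ^i log|z|, and u_i = Σ_{j=1}^n a_{ij} U_j. Then for each 1 ≤ i ≤ n the function z ↦ u_i(z) + 2(2 + γ_{n+1−i}) log|z| is bounded on { z ∈ ℂ∖ℝ_{≤0} : |z| ≥ 1 }. -/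

import Mathlib

open Complex Filter Matrix

/-- The explicit lower unitriangular matrix `Φ(z)` of the `A_n` Toda system, with
`Φ(z)_{ij} = z^{μ_j + ⋯ + μ_{i−1}} / ∏_{l=j}^{i−1} (μ_l + ⋯ + μ_{i−1})` below the
diagonal (0-based indices, `μ` indexed by `0, …, n−1`). -/
noncomputable def PhiA (n : ℕ) (μ : ℕ → ℝ) (z : ℂ) : Matrix (Fin (n + 1)) (Fin (n + 1)) ℂ :=
  Matrix.of fun i j : Fin (n + 1) =>
    if (i : ℕ) = (j : ℕ) then 1
    else if (i : ℕ) < (j : ℕ) then 0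
    else z ^ (((∑ l ∈ Finset.Ico (j : ℕ) (i : ℕ), μ l : ℝ)) : ℂ) /
      ∏ l ∈ Finset.Ico (j : ℕ) (i : ℕ), ((∑ k ∈ Finset.Ico l (i : ℕ), μ k : ℝ) : ℂ)

/-- `D_i(z)`: the leading principal `(i+1)×(i+1)` minor (0-based `i`) of
`(ΛΦ(z))*(ΛΦ(z))`, where `M*` is the conjugate transpose. -/
noncomputable def DA (n : ℕ) (μ : ℕ → ℝ) (lam : Fin (n + 1) → ℝ) (i : Fin n) (z : ℂ) : ℂ :=
  (((Matrix.diagonal (fun k => (lam k : ℂ)) * PhiA n μ z)ᴴ *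
      (Matrix.diagonal (fun k => (lam k : ℂ)) * PhiA n μ z)).submatrix
    (Fin.castLE (Nat.succ_le_succ i.isLt.le)) (Fin.castLE (Nat.succ_le_succ i.isLt.le))).det

/-- `U_i(z) = −log D_i(z) + 2 γ^i log|z|`, and `u_i = Σ_j a_{ij} U_j` (0-based indices,
`gUp j = γ^j`). -/
noncomputable def uA (n : ℕ) (μ : ℕ → ℝ) (lam : Fin (n + 1) → ℝ) (a : ℕ → ℕ → ℝ)
    (gUp : ℕ → ℝ) (i : Fin n) (z : ℂ) : ℝ :=
  ∑ j : Fin n, a (i : ℕ) (j : ℕ) *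
    (-Real.log (DA n μ lam j z).re + 2 * gUp (j : ℕ) * Real.log (‖z‖))

/-!
With `x_k = μ_0 + ⋯ + μ_{k-1}` one has `Φ(z) = diag(z^{x_k}) C diag(z^{-x_k})` for a constant real
lower triangular matrix `C`, so `D_j(z) = |z|^{-2(x_0 + ⋯ + x_j)} det(Aᵀ W A)`, where `A` is formed
by the first `j + 1` columns of `C` and `W = diag(λ_k² |z|^{2 x_k})`. By Cauchy–Binet, `det(Aᵀ W A)`
is a sum of the nonnegative terms `λ_S² det(A_S)² |z|^{2 Σ_{k ∈ S} x_k}` over the `(j+1)`-row sets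
`S`. The exponent is largest for the last `j + 1` rows, whose coefficient is positive because
`C = diag(d) · (∏_{l<q} (x_k - x_l))_{k,q}`, so that its maximal minors are Vandermonde
determinants. Hence `log D_j = 2 e_{j+1} log|z| + O(1)`, where `e_m` is the sum of the `m` largest
`x_k` minus the sum of the `m` smallest; the second differences of `e` are exactly
`μ_i + μ_{n-1-i}`, which turns `Σ_j a_{ij} U_j` into the claimed slope.
-/

open Finset

lemma Fin.val_apply_add_le_of_strictMono {m N : ℕ} {s : Fin m → Fin N} (hs : StrictMono s)
    (p : Fin m) : (s p : ℕ) + m ≤ N + p := by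
  have hcard := card_le_card_of_injOn s (s := Ioi p) (t := Ioi (s p))
    (fun q hq => by simpa using hs (by simpa using hq)) hs.injective.injOn
  simp only [Fin.card_Ioi] at hcard
  have := (s p).isLt
  omega

lemma Real.exists_le_sum_mul_rpow_le {ι : Type*} {S : Finset ι} {c e : ι → ℝ} {E : ℝ}
    (hc : ∀ s ∈ S, 0 ≤ c s) (he : ∀ s ∈ S, e s ≤ E) {s₀ : ι} (hs₀ : s₀ ∈ S) (hc₀ : 0 < c s₀)
    (he₀ : e s₀ = E) :
    ∃ c₀ K, 0 < c₀ ∧ ∀ t : ℝ, 1 ≤ t →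
      c₀ * t ^ E ≤ ∑ s ∈ S, c s * t ^ e s ∧ ∑ s ∈ S, c s * t ^ e s ≤ K * t ^ E := by
  refine ⟨c s₀, ∑ s ∈ S, c s, hc₀, fun t ht => ⟨?_, ?_⟩⟩
  · rw [← he₀]
    exact single_le_sum (f := fun s => c s * t ^ e s)
      (fun s hs => mul_nonneg (hc s hs) (by positivity)) hs₀
  · rw [sum_mul]
    exact sum_le_sum fun s hs =>
      mul_le_mul_of_nonneg_left (Real.rpow_le_rpow_of_exponent_le ht (he s hs)) (hc s hs)

lemma Real.abs_log_sub_mul_log_le {c K E t f : ℝ} (hc : 0 < c) (ht : 0 < t)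
    (hlow : c * t ^ E ≤ f) (hup : f ≤ K * t ^ E) :
    |Real.log f - E * Real.log t| ≤ max |Real.log c| |Real.log K| := by
  have htE : 0 < t ^ E := Real.rpow_pos_of_pos ht E
  have hf : 0 < f := (mul_pos hc htE).trans_le hlow
  have hK : 0 < K := pos_of_mul_pos_left (hf.trans_le hup) htE.le
  have hlog_low := Real.log_le_log (mul_pos hc htE) hlow
  have hlog_up := Real.log_le_log hf hup
  rw [Real.log_mul hc.ne' htE.ne', Real.log_rpow ht] at hlog_low
  rw [Real.log_mul hK.ne' htE.ne', Real.log_rpow ht] at hlog_up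
  rw [abs_le]
  constructor <;> linarith [neg_abs_le (Real.log c), le_abs_self (Real.log K),
    le_max_left |Real.log c| |Real.log K|, le_max_right |Real.log c| |Real.log K|]

theorem Finset.sum_injective_eq_sum_strictMono_sum_perm {M : Type*} [AddCommMonoid M]
    {m N : ℕ} (F : (Fin m → Fin N) → M) :
    ∑ r : Fin m → Fin N with Function.Injective r, F r =
      ∑ s : Fin m → Fin N with StrictMono s, ∑ σ : Equiv.Perm (Fin m), F (s ∘ σ) := by
  rw [← sum_product']
  symm
  refine sum_nbij' (fun sσ => sσ.1 ∘ sσ.2) (fun r => (r ∘ Tuple.sort r, (Tuple.sort r)⁻¹))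
    ?_ ?_ ?_ ?_ (fun _ _ => rfl) <;>
    simp only [mem_product, mem_filter, mem_univ, true_and, and_true]
  · rintro ⟨s, σ⟩ hs
    exact hs.injective.comp σ.injective
  · intro r hr
    exact (Tuple.monotone_sort r).strictMono_of_injective (hr.comp (Tuple.sort r).injective)
  · rintro ⟨s, σ⟩ hs
    have hsort : σ⁻¹ = Tuple.sort (s ∘ σ) := by
      refine Tuple.eq_sort_iff.mpr ⟨?_, fun i j hij hs_eq => ?_⟩
      · simpa [Function.comp_def] using hs.monotone
      · exact absurd (hs.injective (by simpa using hs_eq)) hij.ne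
    simp [← hsort, Function.comp_assoc]
  · intro r _
    simp [Function.comp_assoc]

theorem Matrix.det_mul_eq_sum_prod_mul_det_submatrix {R : Type*} [CommRing R] {m N : ℕ}
    (B : Matrix (Fin m) (Fin N) R) (A : Matrix (Fin N) (Fin m) R) :
    (B * A).det = ∑ r : Fin m → Fin N, (∏ p, B p (r p)) * (A.submatrix r id).det := by
  have hrows : (B * A).det = (detRowAlternating : (Fin m → R) [⋀^Fin m]→ₗ[R] R).toMultilinearMap
      (fun p => ∑ k, B p k • A k) := by
    congr 1
    ext p q
    simp [Matrix.mul_apply, Finset.sum_apply]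
  rw [hrows, MultilinearMap.map_sum]
  refine sum_congr rfl fun r _ => ?_
  rw [MultilinearMap.map_smul_univ]
  rfl

theorem Matrix.det_mul_eq_sum_strictMono {R : Type*} [CommRing R] {m N : ℕ}
    (B : Matrix (Fin m) (Fin N) R) (A : Matrix (Fin N) (Fin m) R) :
    (B * A).det =
      ∑ s : Fin m → Fin N with StrictMono s, (B.submatrix id s).det * (A.submatrix s id).det := by
  classical
  rw [det_mul_eq_sum_prod_mul_det_submatrix,
    ← sum_filter_add_sum_filter_not univ Function.Injective,
    sum_eq_zero (s := filter (fun r => ¬ Function.Injective r) univ), add_zero,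
    sum_injective_eq_sum_strictMono_sum_perm]
  · refine sum_congr rfl fun s _ => ?_
    rw [← det_transpose (B.submatrix id s), det_apply' (B.submatrix id s)ᵀ, sum_mul]
    refine sum_congr rfl fun σ _ => ?_
    rw [show A.submatrix (s ∘ σ) id = (A.submatrix s id).submatrix σ id from rfl, det_permute]
    simp only [Function.comp_apply, transpose_apply, submatrix_apply, id]
    ring
  · intro r hr
    obtain ⟨p, q, hpq, hne⟩ := Function.not_injective_iff.mp (mem_filter.mp hr).2
    rw [det_zero_of_row_eq hne (by ext; simp [hpq]), mul_zero]

theorem Matrix.det_transpose_mul_diagonal_mul {R : Type*} [CommRing R] {m N : ℕ}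
    (A : Matrix (Fin N) (Fin m) R) (w : Fin N → R) :
    (Aᵀ * diagonal w * A).det =
      ∑ s : Fin m → Fin N with StrictMono s, (∏ p, w (s p)) * (A.submatrix s id).det ^ 2 := by
  rw [det_mul_eq_sum_strictMono]
  refine sum_congr rfl fun s _ => ?_
  rw [show (Aᵀ * diagonal w).submatrix id s = (A.submatrix s id)ᵀ * diagonal (w ∘ s) by
    ext; simp [mul_diagonal], det_mul, det_transpose, det_diagonal]
  simp only [Function.comp_apply]
  ring

theorem Matrix.det_of_prod_sub_eq_det_vandermonde {R : Type*} [CommRing R] [Nontrivial R] {m : ℕ}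
    (v : Fin m → R) (y : ℕ → R) :
    (Matrix.of fun p q : Fin m => ∏ l ∈ range q, (v p - y l)).det = (vandermonde v).det := by
  rw [det_eval_matrixOfPolynomials_eq_det_vandermonde v
    (fun q => ∏ l ∈ range q, (Polynomial.X - Polynomial.C (y l)))]
  · simp [Polynomial.eval_prod]
  · intro q
    rw [Polynomial.natDegree_prod_of_monic _ _ fun l _ => Polynomial.monic_X_sub_C _]
    simp
  · exact fun q => Polynomial.monic_prod_of_monic _ _ fun l _ => Polynomial.monic_X_sub_C _

theorem Matrix.det_submatrix_conjTranspose_mul_self_diagonal_mul_diagonal {R ι κ : Type*}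
    [CommRing R] [StarRing R] [Fintype ι] [DecidableEq ι] [Fintype κ] [DecidableEq κ]
    (d₁ : ι → R) (C : Matrix ι ι R) (d₂ : ι → R) (e : κ → ι) :
    (((diagonal d₁ * C * diagonal d₂)ᴴ * (diagonal d₁ * C * diagonal d₂)).submatrix e e).det =
      (∏ p, star (d₂ (e p)) * d₂ (e p)) *
        ((Cᴴ * diagonal (fun k => star (d₁ k) * d₁ k) * C).submatrix e e).det := by
  have hsub : ((diagonal d₁ * C * diagonal d₂)ᴴ * (diagonal d₁ * C * diagonal d₂)).submatrix e e =
      diagonal (fun p => star (d₂ (e p))) *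
        (Cᴴ * diagonal (fun k => star (d₁ k) * d₁ k) * C).submatrix e e *
          diagonal (fun p => d₂ (e p)) := by
    have hgram : (diagonal d₁ * C * diagonal d₂)ᴴ * (diagonal d₁ * C * diagonal d₂) =
        diagonal (star d₂) * (Cᴴ * diagonal (fun k => star (d₁ k) * d₁ k) * C) * diagonal d₂ := by
      simp only [conjTranspose_mul, diagonal_conjTranspose, Matrix.mul_assoc,
        ← Matrix.mul_assoc (diagonal (star d₁)), diagonal_mul_diagonal]
      rfl
    rw [hgram]
    ext p q
    simp [diagonal_mul, mul_diagonal]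
  rw [hsub, det_mul, det_mul, det_diagonal, det_diagonal, prod_mul_distrib]
  ring

lemma Complex.conj_cpow_ofReal_mul_self (z : ℂ) (x : ℝ) :
    (starRingEnd ℂ) (z ^ (x : ℂ)) * z ^ (x : ℂ) = ((‖z‖ ^ (2 * x) : ℝ) : ℂ) := by
  rw [Complex.conj_mul', Complex.norm_cpow_real, ← Complex.ofReal_pow, ← Real.rpow_natCast,
    ← Real.rpow_mul (norm_nonneg z), mul_comm]
  norm_num

namespace AnToda

def cumSum (μ : ℕ → ℝ) (k : ℕ) : ℝ := ∑ l ∈ range k, μ l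

lemma cumSum_succ (μ : ℕ → ℝ) (k : ℕ) : cumSum μ (k + 1) = cumSum μ k + μ k :=
  sum_range_succ μ k

lemma strictMonoOn_cumSum {n : ℕ} {μ : ℕ → ℝ} (hμ : ∀ l < n, 0 < μ l) :
    StrictMonoOn (cumSum μ) (Set.Iic n) := by
  intro a _ b hb hab
  have hbn : b ≤ n := hb
  refine sum_lt_sum_of_subset (range_subset_range.mpr hab.le) (i := a) (by simpa using hab)
    (by simp) (hμ a (by omega)) fun l hl _ => (hμ l ?_).le
  have := mem_range.mp hl
  omega

noncomputable def coeffMatrix (n : ℕ) (μ : ℕ → ℝ) : Matrix (Fin (n + 1)) (Fin (n + 1)) ℝ :=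
  Matrix.of fun i j => if (j : ℕ) ≤ i then
    (∏ l ∈ Ico (j : ℕ) i, (cumSum μ i - cumSum μ l))⁻¹ else 0

lemma coeffMatrix_eq_diagonal_mul {n : ℕ} {μ : ℕ → ℝ} (hμ : ∀ l < n, 0 < μ l) :
    coeffMatrix n μ =
      diagonal (fun i : Fin (n + 1) => (∏ l ∈ range i, (cumSum μ i - cumSum μ l))⁻¹) *
      Matrix.of fun i q : Fin (n + 1) => ∏ l ∈ range q, (cumSum μ i - cumSum μ l) := by
  ext i q
  rw [diagonal_mul, of_apply, coeffMatrix, of_apply]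
  split_ifs with hqi
  · rw [← prod_range_mul_prod_Ico _ hqi, mul_inv, mul_comm _ (_ : ℝ)⁻¹, mul_assoc, inv_mul_cancel₀,
      mul_one]
    refine prod_ne_zero_iff.mpr fun l hl => sub_ne_zero.mpr (ne_of_gt ?_)
    have := mem_range.mp hl
    exact strictMonoOn_cumSum hμ (Set.mem_Iic.mpr (by omega)) (Set.mem_Iic.mpr (by omega))
      (by omega)
  · rw [prod_eq_zero (s := range q) (i := (i : ℕ)) (mem_range.mpr (by omega)) (sub_self _),
      mul_zero]

lemma det_coeffMatrix_submatrix_ne_zero {n m : ℕ} {μ : ℕ → ℝ} (hμ : ∀ l < n, 0 < μ l)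
    (h : m ≤ n + 1) {r : Fin m → Fin (n + 1)} (hr : Function.Injective r) :
    ((coeffMatrix n μ).submatrix r (Fin.castLE h)).det ≠ 0 := by
  have hx : Set.InjOn (cumSum μ) (Set.Iic n) := (strictMonoOn_cumSum hμ).injOn
  have hfac : (coeffMatrix n μ).submatrix r (Fin.castLE h) =
      diagonal (fun p => (∏ l ∈ range (r p), (cumSum μ (r p) - cumSum μ l))⁻¹) *
        Matrix.of fun p q : Fin m => ∏ l ∈ range q, (cumSum μ (r p) - cumSum μ l) := by
    rw [coeffMatrix_eq_diagonal_mul hμ]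
    ext p q
    simp [diagonal_mul]
  rw [hfac, det_mul, det_diagonal, det_of_prod_sub_eq_det_vandermonde (fun p => cumSum μ (r p))]
  refine mul_ne_zero (prod_ne_zero_iff.mpr fun p _ => inv_ne_zero <| prod_ne_zero_iff.mpr
    fun l hl => sub_ne_zero.mpr fun heq => ?_) (det_vandermonde_ne_zero_iff.mpr fun p q hpq => ?_)
  · have := mem_range.mp hl
    have := hx (Set.mem_Iic.mpr (by omega)) (Set.mem_Iic.mpr (by omega)) heq
    omega
  · exact hr (Fin.ext (hx (Set.mem_Iic.mpr (by omega)) (Set.mem_Iic.mpr (by omega)) hpq))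

lemma PhiA_eq {n : ℕ} (μ : ℕ → ℝ) {z : ℂ} (hz : z ≠ 0) :
    PhiA n μ z = diagonal (fun k : Fin (n + 1) => z ^ (cumSum μ k : ℂ)) *
      (coeffMatrix n μ).map ofReal * diagonal (fun k : Fin (n + 1) => z ^ (-cumSum μ k : ℂ)) := by
  ext i q
  rw [mul_diagonal, diagonal_mul, map_apply, PhiA, coeffMatrix, of_apply, of_apply]
  rcases lt_trichotomy (i : ℕ) q with hlt | heq | hgt
  · simp [hlt.ne, hlt, hlt.not_ge]
  · simp [Fin.ext heq, ← cpow_add _ _ hz]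
  · have hsum : ∀ l ≤ (i : ℕ), ∑ k ∈ Ico l i, μ k = cumSum μ i - cumSum μ l :=
      fun l hl => sum_Ico_eq_sub μ hl
    rw [if_neg hgt.ne', if_neg hgt.not_gt, if_pos hgt.le, hsum q hgt.le,
      prod_congr rfl fun l hl => by rw [hsum l (mem_Ico.mp hl).2.le], mul_assoc, mul_comm,
      mul_assoc, ← cpow_add _ _ hz]
    push_cast
    ring_nf

noncomputable def weight (n : ℕ) (μ : ℕ → ℝ) (lam : Fin (n + 1) → ℝ) (t : ℝ) (k : Fin (n + 1)) :
    ℝ :=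
  lam k ^ 2 * t ^ (2 * cumSum μ k)

noncomputable def gram (n : ℕ) (μ : ℕ → ℝ) (lam : Fin (n + 1) → ℝ) {m : ℕ} (h : m ≤ n + 1)
    (t : ℝ) : ℝ :=
  (((coeffMatrix n μ).submatrix id (Fin.castLE h))ᵀ * diagonal (weight n μ lam t) *
    (coeffMatrix n μ).submatrix id (Fin.castLE h)).det

noncomputable def topExponent (n : ℕ) (μ : ℕ → ℝ) (m : ℕ) : ℝ :=
  ∑ p ∈ range m, cumSum μ (n + 1 - m + p)

noncomputable def botExponent (μ : ℕ → ℝ) (m : ℕ) : ℝ := ∑ p ∈ range m, cumSum μ p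

noncomputable def growthExponent (n : ℕ) (μ : ℕ → ℝ) (m : ℕ) : ℝ :=
  topExponent n μ m - botExponent μ m

lemma exists_le_gram_le {n m : ℕ} {μ : ℕ → ℝ} {lam : Fin (n + 1) → ℝ} (hμ : ∀ l < n, 0 < μ l)
    (hlam : ∀ k, 0 < lam k) (h : m ≤ n + 1) :
    ∃ c K, 0 < c ∧ ∀ t : ℝ, 1 ≤ t →
      c * t ^ (2 * topExponent n μ m) ≤ gram n μ lam h t ∧
        gram n μ lam h t ≤ K * t ^ (2 * topExponent n μ m) := by
  set coef : (Fin m → Fin (n + 1)) → ℝ := fun s =>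
    (∏ p, lam (s p) ^ 2) * ((coeffMatrix n μ).submatrix s (Fin.castLE h)).det ^ 2
  have hgram : ∀ t, 0 < t → gram n μ lam h t =
      ∑ s : Fin m → Fin (n + 1) with StrictMono s,
        coef s * t ^ (2 * ∑ p, cumSum μ (s p)) := by
    intro t ht
    rw [gram, det_transpose_mul_diagonal_mul]
    refine sum_congr rfl fun s _ => ?_
    simp only [coef, weight, prod_mul_distrib, mul_sum, ← Real.rpow_sum_of_pos ht,
      submatrix_submatrix, Function.comp_id, Function.id_comp]
    ring
  have htop : ∀ s : Fin m → Fin (n + 1), StrictMono s →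
      2 * ∑ p, cumSum μ (s p) ≤ 2 * topExponent n μ m := by
    intro s hs
    rw [topExponent, ← Fin.sum_univ_eq_sum_range (fun p => cumSum μ (n + 1 - m + p))]
    gcongr with p
    have := Fin.val_apply_add_le_of_strictMono hs p
    exact (strictMonoOn_cumSum hμ).monotoneOn (Set.mem_Iic.mpr (by omega))
      (Set.mem_Iic.mpr (by omega)) (by omega)
  set s₀ : Fin m → Fin (n + 1) := fun p => ⟨n + 1 - m + p, by omega⟩
  have hs₀ : StrictMono s₀ := fun p q hpq => by simp only [s₀, Fin.mk_lt_mk]; omega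
  obtain ⟨c, K, hc, hbounds⟩ := Real.exists_le_sum_mul_rpow_le (S := {s | StrictMono s})
    (c := coef) (e := fun s => 2 * ∑ p, cumSum μ (s p)) (fun s _ => by positivity)
    (fun s hs => htop s (by simpa using hs)) (s₀ := s₀) (by simpa using hs₀)
    (mul_pos (prod_pos fun p _ => pow_pos (hlam _) 2)
      (by have := det_coeffMatrix_submatrix_ne_zero hμ h hs₀.injective; positivity))
    (by rw [topExponent, ← Fin.sum_univ_eq_sum_range (fun p => cumSum μ (n + 1 - m + p))])
  exact ⟨c, K, hc, fun t ht => hgram t (by linarith) ▸ hbounds t ht⟩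

lemma DA_eq {n : ℕ} (μ : ℕ → ℝ) (lam : Fin (n + 1) → ℝ) (j : Fin n) {z : ℂ} (hz : z ≠ 0) :
    DA n μ lam j z = ((‖z‖ ^ (-(2 * botExponent μ (j + 1))) *
      gram n μ lam (Nat.succ_le_succ j.isLt.le) ‖z‖ : ℝ) : ℂ) := by
  set e := Fin.castLE (Nat.succ_le_succ j.isLt.le)
  have hΛΦ : diagonal (fun k => (lam k : ℂ)) * PhiA n μ z =
      diagonal (fun k : Fin (n + 1) => (lam k : ℂ) * z ^ (cumSum μ k : ℂ)) *
        (coeffMatrix n μ).map ofReal * diagonal (fun k : Fin (n + 1) => z ^ (-cumSum μ k : ℂ)) := by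
    rw [PhiA_eq μ hz, ← Matrix.mul_assoc, ← Matrix.mul_assoc, diagonal_mul_diagonal]
  have hscale : ∏ p : Fin (j + 1), star (z ^ (-cumSum μ (e p) : ℂ)) * z ^ (-cumSum μ (e p) : ℂ) =
      ((‖z‖ ^ (-(2 * botExponent μ (j + 1))) : ℝ) : ℂ) := by
    simp only [← ofReal_neg, Complex.star_def, Complex.conj_cpow_ofReal_mul_self, ← ofReal_prod,
      ← Real.rpow_sum_of_pos (norm_pos_iff.mpr hz)]
    rw [botExponent, ← Fin.sum_univ_eq_sum_range, mul_sum, ← sum_neg_distrib]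
    simp only [mul_neg]
    rfl
  have hgram : (((coeffMatrix n μ).map ofReal)ᴴ *
      diagonal (fun k => star ((lam k : ℂ) * z ^ (cumSum μ k : ℂ)) *
        ((lam k : ℂ) * z ^ (cumSum μ k : ℂ))) *
        (coeffMatrix n μ).map ofReal).submatrix e e =
      (((coeffMatrix n μ).submatrix id e)ᵀ * diagonal (weight n μ lam ‖z‖) *
        (coeffMatrix n μ).submatrix id e).map ofReal := by
    have hw : ∀ k, star ((lam k : ℂ) * z ^ (cumSum μ k : ℂ)) *
        ((lam k : ℂ) * z ^ (cumSum μ k : ℂ)) =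
        (weight n μ lam ‖z‖ k : ℂ) := fun k => by
      rw [weight, ofReal_mul, ← Complex.conj_cpow_ofReal_mul_self, Complex.star_def, map_mul,
        conj_ofReal]
      push_cast
      ring
    simp_rw [hw]
    ext p q
    simp [Matrix.mul_apply, diagonal_apply, apply_ite]
  rw [DA, hΛΦ, det_submatrix_conjTranspose_mul_self_diagonal_mul_diagonal, hscale, hgram,
    ofReal_mul, gram]
  exact congrArg _ (ofRealHom.map_det _).symm

lemma exists_abs_log_re_DA_sub_le {n : ℕ} {μ : ℕ → ℝ} {lam : Fin (n + 1) → ℝ}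
    (hμ : ∀ l < n, 0 < μ l) (hlam : ∀ k, 0 < lam k) (j : Fin n) :
    ∃ R, ∀ z : ℂ, 1 ≤ ‖z‖ →
      |Real.log (DA n μ lam j z).re - 2 * growthExponent n μ (j + 1) * Real.log ‖z‖| ≤ R := by
  obtain ⟨c, K, hc, hbounds⟩ := exists_le_gram_le hμ hlam (Nat.succ_le_succ j.isLt.le)
  refine ⟨max |Real.log c| |Real.log K|, fun z hz => ?_⟩
  have ht : 0 < ‖z‖ := by linarith
  obtain ⟨hlow, hup⟩ := hbounds ‖z‖ hz
  have hscale : 0 < ‖z‖ ^ (-(2 * botExponent μ (j + 1))) := by positivity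
  have hexp : ∀ C, C * ‖z‖ ^ (2 * growthExponent n μ (j + 1)) =
      ‖z‖ ^ (-(2 * botExponent μ (j + 1))) * (C * ‖z‖ ^ (2 * topExponent n μ (j + 1))) := by
    intro C
    rw [mul_left_comm, ← Real.rpow_add ht, growthExponent]
    ring_nf
  rw [DA_eq μ lam j (norm_pos_iff.mp ht), ofReal_re]
  refine Real.abs_log_sub_mul_log_le hc ht ?_ ?_
  · rw [hexp]
    exact mul_le_mul_of_nonneg_left hlow hscale.le
  · rw [hexp]
    exact mul_le_mul_of_nonneg_left hup hscale.le

lemma growthExponent_zero (n : ℕ) (μ : ℕ → ℝ) : growthExponent n μ 0 = 0 := by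
  simp [growthExponent, topExponent, botExponent]

lemma growthExponent_last (n : ℕ) (μ : ℕ → ℝ) : growthExponent n μ (n + 1) = 0 := by
  simp [growthExponent, topExponent, botExponent]

lemma growthExponent_succ_sub {n m : ℕ} (μ : ℕ → ℝ) (hm : m ≤ n) :
    growthExponent n μ (m + 1) - growthExponent n μ m = cumSum μ (n - m) - cumSum μ m := by
  have htop : topExponent n μ (m + 1) = topExponent n μ m + cumSum μ (n - m) := by
    rw [topExponent, sum_range_succ', topExponent, Nat.add_zero,
      show n + 1 - (m + 1) = n - m by omega]
    congr 1
    exact sum_congr rfl fun p _ => by congr 1; omega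
  have hbot : botExponent μ (m + 1) = botExponent μ m + cumSum μ m := sum_range_succ _ _
  rw [growthExponent, growthExponent, htop, hbot]
  ring

/-- Indexing `b` by `j + 1` lets `b 0 = b (n + 1) = 0` stand for the missing neighbours at both
ends of the chain. -/
lemma sum_cartan_mul {n : ℕ} {a : ℕ → ℕ → ℝ}
    (ha : ∀ i j, a i j = if i = j then 2 else if i = j + 1 ∨ j = i + 1 then -1 else 0)
    {b : ℕ → ℝ} (hb₀ : b 0 = 0) (hbₙ : b (n + 1) = 0) {i : ℕ} (hi : i < n) :
    ∑ j ∈ range n, a i j * b (j + 1) = 2 * b (i + 1) - b i - b (i + 2) := by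
  have hsplit : ∀ j, a i j * b (j + 1) = (if j = i then 2 * b (i + 1) else 0)
      - (if j + 1 = i then b i else 0) - (if j = i + 1 then b (i + 2) else 0) := by
    intro j
    rw [ha]
    split_ifs <;> first | omega | (subst_vars; ring)
  simp only [hsplit, sum_sub_distrib, sum_ite_eq', mem_range, if_pos hi]
  have hprev : ∑ j ∈ range n, (if j + 1 = i then b i else 0) = b i := by
    rcases i with _ | i
    · simp [hb₀]
    · simp [show i < n by omega]
  have hnext : (if i + 1 < n then b (i + 2) else 0) = b (i + 2) := by
    split_ifs with h
    · rfl
    · rw [show i + 2 = n + 1 by omega, hbₙ]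
  rw [hprev, hnext]

lemma sum_cartan_mul_growthExponent {n : ℕ} {μ : ℕ → ℝ} {a : ℕ → ℕ → ℝ}
    (ha : ∀ i j, a i j = if i = j then 2 else if i = j + 1 ∨ j = i + 1 then -1 else 0)
    {i : ℕ} (hi : i < n) :
    ∑ j ∈ range n, a i j * growthExponent n μ (j + 1) = μ i + μ (n - 1 - i) := by
  rw [sum_cartan_mul ha (growthExponent_zero n μ) (growthExponent_last n μ) hi]
  have h₁ := growthExponent_succ_sub μ (show i ≤ n by omega)
  have h₂ := growthExponent_succ_sub μ (show i + 1 ≤ n by omega)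
  have h₃ := cumSum_succ μ i
  have h₄ := cumSum_succ μ (n - 1 - i)
  rw [show n - 1 - i + 1 = n - i by omega] at h₄
  rw [show n - (i + 1) = n - 1 - i by omega] at h₂
  linarith

lemma uA_add_mul_log_eq {n : ℕ} {γ μ : ℕ → ℝ} (hμ : ∀ i, μ i = γ i + 1) {a : ℕ → ℕ → ℝ}
    (ha : ∀ i j, a i j = if i = j then 2 else if i = j + 1 ∨ j = i + 1 then -1 else 0)
    {gUp : ℕ → ℝ} (hg : ∀ i < n, ∑ j ∈ range n, a i j * gUp j = γ i)
    (lam : Fin (n + 1) → ℝ) (i : Fin n) (z : ℂ) :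
    uA n μ lam a gUp i z + 2 * (2 + γ (n - 1 - i)) * Real.log ‖z‖ =
      ∑ j : Fin n, a i j *
        -(Real.log (DA n μ lam j z).re - 2 * growthExponent n μ (j + 1) * Real.log ‖z‖) := by
  have hslope : ∑ j : Fin n, a i j * (2 * gUp j - 2 * growthExponent n μ (j + 1)) =
      -(2 * (2 + γ (n - 1 - i))) := by
    rw [Fin.sum_univ_eq_sum_range (fun j => a i j * (2 * gUp j - 2 * growthExponent n μ (j + 1)))]
    simp only [mul_sub, mul_left_comm _ (2 : ℝ), sum_sub_distrib, ← mul_sum]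
    rw [hg i i.isLt, sum_cartan_mul_growthExponent ha i.isLt, hμ, hμ]
    ring
  have hsplit : uA n μ lam a gUp i z = ∑ j : Fin n, a i j *
      -(Real.log (DA n μ lam j z).re - 2 * growthExponent n μ (j + 1) * Real.log ‖z‖) +
      (∑ j : Fin n, a i j * (2 * gUp j - 2 * growthExponent n μ (j + 1))) * Real.log ‖z‖ := by
    rw [uA, sum_mul, ← sum_add_distrib]
    exact sum_congr rfl fun j _ => by ring
  rw [hsplit, hslope, neg_mul, neg_add_cancel_right]

end AnToda

theorem An_toda_asymptotics_general (n : ℕ) (γ : ℕ → ℝ) (hγ : ∀ i < n, -1 < γ i)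
    (μ : ℕ → ℝ) (hμ : ∀ i, μ i = γ i + 1)
    (a : ℕ → ℕ → ℝ)
    (ha : ∀ i j, a i j = if i = j then 2 else if i = j + 1 ∨ j = i + 1 then -1 else 0)
    (gUp : ℕ → ℝ) (hg : ∀ i < n, ∑ j ∈ Finset.range n, a i j * gUp j = γ i)
    (lam : Fin (n + 1) → ℝ) (hlam : ∀ k, 0 < lam k) :
    ∀ i : Fin n, ∃ M : ℝ, ∀ z ∈ Complex.slitPlane, 1 ≤ ‖z‖ →
      |uA n μ lam a gUp i z +
        2 * (2 + γ (n - 1 - (i : ℕ))) * Real.log (‖z‖)| ≤ M := by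
  intro i
  have hμpos : ∀ l < n, 0 < μ l := fun l hl => by linarith [hμ l, hγ l hl]
  choose R hR using fun j : Fin n => AnToda.exists_abs_log_re_DA_sub_le hμpos hlam j
  refine ⟨∑ j : Fin n, |a i j| * R j, fun z _ hz => ?_⟩
  rw [AnToda.uA_add_mul_log_eq hμ ha hg lam i z]
  calc _ ≤ ∑ j : Fin n, |a i j * -(Real.log (DA n μ lam j z).re -
          2 * AnToda.growthExponent n μ (j + 1) * Real.log ‖z‖)| := abs_sum_le_sum_abs _ _
    _ ≤ ∑ j : Fin n, |a i j| * R j := sum_le_sum fun j _ => by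
      rw [abs_mul, abs_neg]
      exact mul_le_mul_of_nonneg_left (hR j z hz) (abs_nonneg _)

/-- For the `A_n` Toda solutions with `C = Id`, each
`u_i(z) + 2(2 + γ_{n+1−i}) log|z|` is bounded on `{z ∈ ℂ∖ℝ_{≤0} : |z| ≥ 1}` (0-based:
the partner index of `i` is `n − 1 − i`), i.e. `u_i = −2(2 − κγ_i) log|z| + O(1)` at
infinity. -/
theorem An_toda_asymptotics (n : ℕ) (hn : 1 ≤ n) (γ : ℕ → ℝ) (hγ : ∀ i < n, -1 < γ i)
    (μ : ℕ → ℝ) (hμ : ∀ i, μ i = γ i + 1)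
    (a : ℕ → ℕ → ℝ)
    (ha : ∀ i j, a i j = if i = j then 2 else if i = j + 1 ∨ j = i + 1 then -1 else 0)
    (gUp : ℕ → ℝ) (hg : ∀ i < n, ∑ j ∈ Finset.range n, a i j * gUp j = γ i)
    (lam : Fin (n + 1) → ℝ) (hlam : ∀ k, 0 < lam k) (hprod : ∏ k, lam k = 1) :
    ∀ i : Fin n, ∃ M : ℝ, ∀ z ∈ Complex.slitPlane, 1 ≤ ‖z‖ →
      |uA n μ lam a gUp i z +
        2 * (2 + γ (n - 1 - (i : ℕ))) * Real.log (‖z‖)| ≤ M :=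
  An_toda_asymptotics_general n γ hγ μ hμ a ha gUp hg lam hlam
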